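/- arXiv:2505.13946 — 2 statements merged into one kernel-verified Lean document; each statement's English description precedes it below -/
import Mathlib

section
/- Let X, Y, Z be discrete random variables such that Z is conditionally independent of Y given X (Markov chain Y ↔ X ↔ Z). Then for any conditional pmf q(y|z) with q(y|z) > 0 on the support of p(y,z), the mutual information satisfies I(Z;Y) ≥ E_{(x,y)∼p} E_{z∼p(·|x)}[log q(y|z)] + H(Y), where H(Y) is the Shannon entropy of Y. In particular, since H(Y) ≥ 0, I(Z;Y) ≥ E_{(x,y)} E_{z|x}[log q(y|z)]. -/
open Finset

noncomputable section

/-- Mutual information of a joint pmf on `α × β` (natural log). -/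
def MIjoint {α β : Type*} [Fintype α] [Fintype β] (p : α × β → ℝ) : ℝ :=
  ∑ a, ∑ b, p (a, b) * Real.log (p (a, b) / ((∑ b', p (a, b')) * (∑ a', p (a', b))))

/-- Shannon entropy of a finite pmf (natural log). -/
def Entropy {α : Type*} [Fintype α] (p : α → ℝ) : ℝ :=
  -∑ a, p a * Real.log (p a)

/-!
Write `p(z, y)` for the joint law of `(Z, Y)` and `t = q(y|z) p(z) / p(z, y)`. Wherever
`p(z, y) > 0`, the summand `log (p(z, y) / (p(z) p(y)))` of `I(Z;Y)` equals
`log q(y|z) - log p(y) - log t`, and `log t ≤ t - 1` bounds the `p`-average of `log t` by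
`∑ q(y|z) p(z) - ∑ p(z, y) = 0`. This is `E_z[D_KL(p(·|z) ‖ q(·|z))] ≥ 0` written out termwise.
-/

theorem mul_log_sub_mul_log_le_sub {a b : ℝ} (ha : 0 ≤ a) (hb : 0 ≤ b) (hab : 0 < a → 0 < b) :
    a * Real.log b - a * Real.log a ≤ b - a := by
  rcases ha.eq_or_lt with rfl | ha
  · simpa using hb
  have hb := hab ha
  calc a * Real.log b - a * Real.log a = a * Real.log (b / a) := by
        rw [Real.log_div hb.ne' ha.ne']; ring
    _ ≤ a * (b / a - 1) :=
        mul_le_mul_of_nonneg_left (Real.log_le_sub_one_of_pos (div_pos hb ha)) ha.le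
    _ = b - a := by field_simp

theorem entropy_nonneg {α : Type*} [Fintype α] {p : α → ℝ} (hp0 : ∀ a, 0 ≤ p a)
    (hp1 : ∑ a, p a = 1) : 0 ≤ Entropy p := by
  have hle : ∀ a, p a ≤ 1 := fun a => hp1 ▸ single_le_sum (fun b _ => hp0 b) (mem_univ a)
  rw [Entropy, ← sum_neg_distrib]
  exact sum_nonneg fun a _ => by
    simpa [Real.negMulLog] using Real.negMulLog_nonneg (hp0 a) (hle a)

/-- The termwise inequality, with `t = p(z, y)`, `m = p(z)`, `n = p(y)` and `c = q(y|z)`. -/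
theorem mul_log_sub_mul_log_div_mul_le {t c m n : ℝ} (ht : 0 ≤ t) (htm : t ≤ m) (htn : t ≤ n)
    (hc : 0 ≤ c) (htc : 0 < t → 0 < c) :
    t * Real.log c - t * Real.log n - t * Real.log (t / (m * n)) ≤ c * m - t := by
  rcases ht.eq_or_lt with rfl | ht
  · simpa using mul_nonneg hc htm
  have hc := htc ht
  have hm := ht.trans_le htm
  have hn := ht.trans_le htn
  calc t * Real.log c - t * Real.log n - t * Real.log (t / (m * n))
      = t * Real.log (c * m) - t * Real.log t := by
        rw [Real.log_div ht.ne' (mul_pos hm hn).ne', Real.log_mul hm.ne' hn.ne',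
          Real.log_mul hc.ne' hm.ne']
        ring
    _ ≤ c * m - t := mul_log_sub_mul_log_le_sub ht.le (mul_pos hc hm).le fun _ => mul_pos hc hm

theorem sum_mul_log_add_entropy_le_MIjoint {α β : Type*} [Fintype α] [Fintype β]
    {p : α × β → ℝ} {q : α → β → ℝ} (hp0 : ∀ ab, 0 ≤ p ab) (hq0 : ∀ a b, 0 ≤ q a b)
    (hq1 : ∀ a, ∑ b, q a b = 1) (hqpos : ∀ a b, 0 < p (a, b) → 0 < q a b) :
    ∑ a, ∑ b, p (a, b) * Real.log (q a b) + Entropy (fun b => ∑ a, p (a, b)) ≤ MIjoint p := by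
  have hentropy : Entropy (fun b => ∑ a, p (a, b))
      = -∑ a, ∑ b, p (a, b) * Real.log (∑ a', p (a', b)) := by
    rw [Entropy, sum_comm]
    simp only [sum_mul]
  have hpoint : ∀ a b, p (a, b) * Real.log (q a b) - p (a, b) * Real.log (∑ a', p (a', b))
      - p (a, b) * Real.log (p (a, b) / ((∑ b', p (a, b')) * (∑ a', p (a', b))))
      ≤ q a b * (∑ b', p (a, b')) - p (a, b) := fun a b =>
    mul_log_sub_mul_log_div_mul_le (hp0 _)
      (single_le_sum (f := fun b' => p (a, b')) (fun _ _ => hp0 _) (mem_univ b))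
      (single_le_sum (f := fun a' => p (a', b)) (fun _ _ => hp0 _) (mem_univ a))
      (hq0 a b) (hqpos a b)
  have hmass : ∑ a, ∑ b, (q a b * (∑ b', p (a, b')) - p (a, b)) = 0 := by
    simp [sum_sub_distrib, ← sum_mul, hq1]
  have := sum_le_sum fun a (_ : a ∈ univ) => sum_le_sum fun b (_ : b ∈ univ) => hpoint a b
  simp only [sum_sub_distrib] at this hmass
  rw [hentropy, MIjoint]
  linarith

/-- Variational lower bound on the relevance term of the IB objective.
The joint law is `p(x,y,z) = pX x * pY x y * pZ x z` (Markov chain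
`Y ↔ X ↔ Z`).  For any conditional pmf `q(y|z)` positive on the support of
`p(y,z)`, `I(Z;Y) ≥ E_{(x,y)} E_{z|x}[log q(y|z)] + H(Y)`, and in particular
(since `H(Y) ≥ 0`) `I(Z;Y) ≥ E_{(x,y)} E_{z|x}[log q(y|z)]`. -/
theorem ib_relevance_variational_bound
    {𝒳 𝒴 𝒵 : Type*} [Fintype 𝒳] [Fintype 𝒴] [Fintype 𝒵]
    (pX : 𝒳 → ℝ) (pY : 𝒳 → 𝒴 → ℝ) (pZ : 𝒳 → 𝒵 → ℝ) (q : 𝒵 → 𝒴 → ℝ)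
    (hpX0 : ∀ x, 0 ≤ pX x) (hpX1 : ∑ x, pX x = 1)
    (hpY0 : ∀ x y, 0 ≤ pY x y) (hpY1 : ∀ x, ∑ y, pY x y = 1)
    (hpZ0 : ∀ x z, 0 ≤ pZ x z) (hpZ1 : ∀ x, ∑ z, pZ x z = 1)
    (hq0 : ∀ z y, 0 ≤ q z y) (hq1 : ∀ z, ∑ y, q z y = 1)
    (hqpos : ∀ z y, 0 < ∑ x, pX x * pY x y * pZ x z → 0 < q z y) :
    (MIjoint (fun zy : 𝒵 × 𝒴 => ∑ x, pX x * pY x zy.2 * pZ x zy.1)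
        ≥ (∑ x, ∑ y, pX x * pY x y * ∑ z, pZ x z * Real.log (q z y))
          + Entropy (fun y => ∑ x, pX x * pY x y))
    ∧ MIjoint (fun zy : 𝒵 × 𝒴 => ∑ x, pX x * pY x zy.2 * pZ x zy.1)
        ≥ ∑ x, ∑ y, pX x * pY x y * ∑ z, pZ x z * Real.log (q z y) := by
  have hmarg : (fun y => ∑ z, ∑ x, pX x * pY x y * pZ x z) = fun y => ∑ x, pX x * pY x y := by
    ext y
    rw [sum_comm]
    simp only [mul_assoc, ← mul_sum, hpZ1, mul_one]
  have hexp : ∑ z, ∑ y, (∑ x, pX x * pY x y * pZ x z) * Real.log (q z y)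
      = ∑ x, ∑ y, pX x * pY x y * ∑ z, pZ x z * Real.log (q z y) := by
    simp only [sum_mul, mul_sum]
    rw [sum_comm, sum_congr rfl fun y _ => sum_comm, sum_comm]
    simp only [mul_assoc]
  have hbound := sum_mul_log_add_entropy_le_MIjoint
    (p := fun zy : 𝒵 × 𝒴 => ∑ x, pX x * pY x zy.2 * pZ x zy.1)
    (fun _ => sum_nonneg fun x _ => mul_nonneg (mul_nonneg (hpX0 x) (hpY0 x _)) (hpZ0 x _))
    hq0 hq1 hqpos
  rw [hmarg, hexp] at hbound
  have hentropy_nonneg : 0 ≤ Entropy (fun y => ∑ x, pX x * pY x y) :=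
    entropy_nonneg (fun y => sum_nonneg fun x _ => mul_nonneg (hpX0 x) (hpY0 x y))
      (by rw [sum_comm]; simp only [← mul_sum, hpY1, mul_one, hpX1])
  exact ⟨hbound, by linarith⟩
end
end

section
/- Combining the two variational bounds: for discrete random variables X, Y, Z with Markov chain Y ↔ X ↔ Z, any prior pmf r on 𝒵 and any conditional pmf q(y|z) (both positive on the relevant supports), and any β ≥ 0, the IB objective satisfies I(Z;Y) - β·I(Z;X) ≥ E_{(x,y)}E_{z|x}[log q(y|z)] - β·E_x[D_KL(p(·|x) || r)]. -/
open Finset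

noncomputable section

/-- Kullback–Leibler divergence between finite pmfs (natural log). -/
def KLdiv {𝒵 : Type*} [Fintype 𝒵] (p q : 𝒵 → ℝ) : ℝ :=
  ∑ z, p z * Real.log (p z / q z)

/-!
`I(Z;Y) ≥ E[log q(y|z)]` and `I(Z;X) ≤ E_x D(p(·|x) ‖ r)` are both Gibbs' inequality. For a
joint law `P` on `A × B` and the weights `(P_A ⊗ q)(a, b) = P_A(a) q(b|a)`,
`I(A;B) = E_P[log q] + D(P ‖ P_A ⊗ q) + H(B)` with the last two terms nonnegative, while
`E_b D(P(·|b) ‖ r) = I(A;B) + D(P_A ‖ r)`.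
-/
open Real

theorem sub_le_mul_log_div {p q : ℝ} (hp : 0 ≤ p) (hq : 0 ≤ q) (hpq : 0 < p → 0 < q) :
    p - q ≤ p * log (p / q) := by
  rcases hp.eq_or_lt with rfl | hp
  · simpa using hq
  have hlog := one_sub_inv_le_log_of_pos (div_pos hp (hpq hp))
  rw [inv_div] at hlog
  calc p - q = p * (1 - q / p) := by field_simp
    _ ≤ p * log (p / q) := mul_le_mul_of_nonneg_left hlog hp.le

theorem sum_mul_log_div_nonneg {ι : Type*} [Fintype ι] {p q : ι → ℝ} (hp : ∀ i, 0 ≤ p i)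
    (hq : ∀ i, 0 ≤ q i) (hpq : ∀ i, 0 < p i → 0 < q i) (hsum : ∑ i, q i ≤ ∑ i, p i) :
    0 ≤ ∑ i, p i * log (p i / q i) :=
  calc 0 ≤ ∑ i, (p i - q i) := by rw [sum_sub_distrib]; linarith
    _ ≤ _ := sum_le_sum fun i _ => sub_le_mul_log_div (hp i) (hq i) (hpq i)

section MutualInformation

variable {α β : Type*} [Fintype α] [Fintype β]

theorem sum_mul_log_le_MIjoint (P : α × β → ℝ) (q : α → β → ℝ) (hP : ∀ ab, 0 ≤ P ab)
    (hP1 : ∑ ab, P ab ≤ 1) (hq : ∀ a b, 0 ≤ q a b) (hq1 : ∀ a, ∑ b, q a b ≤ 1)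
    (hPq : ∀ a b, 0 < P (a, b) → 0 < q a b) :
    ∑ a, ∑ b, P (a, b) * log (q a b) ≤ MIjoint P := by
  set PA : α → ℝ := fun a => ∑ b, P (a, b)
  set PB : β → ℝ := fun b => ∑ a, P (a, b)
  have hPA : ∀ a b, P (a, b) ≤ PA a :=
    fun a b => single_le_sum (fun b _ => hP (a, b)) (mem_univ b)
  have hPB : ∀ a b, P (a, b) ≤ PB b :=
    fun a b => single_le_sum (fun a _ => hP (a, b)) (mem_univ a)
  have log_split : ∀ a b, P (a, b) * log (P (a, b) / (PA a * PB b)) =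
      P (a, b) * log (P (a, b) / (PA a * q a b)) + P (a, b) * log (q a b)
        - P (a, b) * log (PB b) := by
    intro a b
    rcases (hP (a, b)).eq_or_lt with h | h
    · simp [← h]
    have hqab := hPq a b h
    have hPAa := h.trans_le (hPA a b)
    have hPBb := h.trans_le (hPB a b)
    rw [log_div h.ne' (mul_pos hPAa hPBb).ne', log_div h.ne' (mul_pos hPAa hqab).ne',
      log_mul hPAa.ne' hPBb.ne', log_mul hPAa.ne' hqab.ne']
    ring
  have gibbs : 0 ≤ ∑ a, ∑ b, P (a, b) * log (P (a, b) / (PA a * q a b)) := by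
    simpa only [Fintype.sum_prod_type] using sum_mul_log_div_nonneg (p := P)
      (q := fun ab => PA ab.1 * q ab.1 ab.2) hP
      (fun ab => mul_nonneg (sum_nonneg fun b _ => hP (ab.1, b)) (hq _ _))
      (fun ab h => mul_pos (h.trans_le (hPA _ _)) (hPq _ _ h))
      (by
        simp only [Fintype.sum_prod_type, ← mul_sum]
        exact sum_le_sum fun a _ =>
          mul_le_of_le_one_right (sum_nonneg fun b _ => hP (a, b)) (hq1 a))
  have entropy : ∑ a, ∑ b, P (a, b) * log (PB b) ≤ 0 := by
    rw [sum_comm]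
    refine sum_nonpos fun b _ => ?_
    rw [← sum_mul]
    refine mul_log_nonpos (sum_nonneg fun a _ => hP (a, b)) (le_trans ?_ hP1)
    rw [Fintype.sum_prod_type, sum_comm]
    exact single_le_sum (f := fun b => ∑ a, P (a, b))
      (fun b _ => sum_nonneg fun a _ => hP (a, b)) (mem_univ b)
  have hMI : MIjoint P = ∑ a, ∑ b, P (a, b) * log (P (a, b) / (PA a * PB b)) := rfl
  simp only [hMI, log_split, sum_add_distrib, sum_sub_distrib]
  linarith

theorem MIjoint_le_sum_mul_KLdiv (w : β → ℝ) (k : β → α → ℝ) (r : α → ℝ)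
    (hw : ∀ b, 0 ≤ w b) (hw1 : ∑ b, w b = 1) (hk : ∀ b a, 0 ≤ k b a) (hk1 : ∀ b, ∑ a, k b a = 1)
    (hr : ∀ a, 0 ≤ r a) (hr1 : ∑ a, r a ≤ 1) (hwr : ∀ a, 0 < ∑ b, w b * k b a → 0 < r a) :
    MIjoint (fun ab : α × β => w ab.2 * k ab.2 ab.1) ≤ ∑ b, w b * KLdiv (k b) r := by
  set M : α → ℝ := fun a => ∑ b, w b * k b a
  have hwkM : ∀ a b, w b * k b a ≤ M a :=
    fun a b => single_le_sum (fun b _ => mul_nonneg (hw b) (hk b a)) (mem_univ b)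
  have marginal : ∀ b, ∑ a, w b * k b a = w b := fun b => by rw [← mul_sum, hk1, mul_one]
  have hMI : MIjoint (fun ab : α × β => w ab.2 * k ab.2 ab.1) =
      ∑ a, ∑ b, w b * k b a * log (w b * k b a / (M a * w b)) := by
    simp only [MIjoint, marginal]
    rfl
  have hKL : ∑ b, w b * KLdiv (k b) r = ∑ a, ∑ b, w b * k b a * log (k b a / r a) := by
    simp only [KLdiv, mul_sum, ← mul_assoc]
    exact sum_comm
  have log_split : ∀ a b, w b * k b a * log (k b a / r a) =
      w b * k b a * log (w b * k b a / (M a * w b)) + w b * k b a * log (M a / r a) := by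
    intro a b
    rcases (mul_nonneg (hw b) (hk b a)).eq_or_lt with h | h
    · simp [← h]
    have hwb := pos_of_mul_pos_left h (hk b a)
    have hkba := pos_of_mul_pos_right h (hw b)
    have hMa := h.trans_le (hwkM a b)
    have hra := hwr a hMa
    rw [log_div hkba.ne' hra.ne', log_div h.ne' (mul_pos hMa hwb).ne', log_div hMa.ne' hra.ne',
      log_mul hwb.ne' hkba.ne', log_mul hMa.ne' hwb.ne']
    ring
  have gibbs : 0 ≤ ∑ a, M a * log (M a / r a) := by
    refine sum_mul_log_div_nonneg (fun a => sum_nonneg fun b _ => mul_nonneg (hw b) (hk b a))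
      hr hwr ?_
    rw [sum_comm]
    simp only [marginal, hw1, hr1]
  rw [hMI, hKL]
  simp only [log_split, sum_add_distrib, ← sum_mul]
  linarith

end MutualInformation

/-- Variational lower bound on the information bottleneck objective (Eq. 4 of
the paper, without the bimodal decomposition).  The joint law is
`p(x,y,z) = pX x * pY x y * pZ x z` (Markov chain `Y ↔ X ↔ Z`): for any prior
pmf `r` on `𝒵` and conditional pmf `q(y|z)` (positive on relevant supports)
and any `β ≥ 0`,
`I(Z;Y) - β·I(Z;X) ≥ E_{(x,y)}E_{z|x}[log q(y|z)] - β·E_x[D_KL(p(·|x) ‖ r)]`. -/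
theorem ib_variational_lower_bound
    {𝒳 𝒴 𝒵 : Type*} [Fintype 𝒳] [Fintype 𝒴] [Fintype 𝒵]
    (pX : 𝒳 → ℝ) (pY : 𝒳 → 𝒴 → ℝ) (pZ : 𝒳 → 𝒵 → ℝ)
    (q : 𝒵 → 𝒴 → ℝ) (r : 𝒵 → ℝ) (β : ℝ) (hβ : 0 ≤ β)
    (hpX0 : ∀ x, 0 ≤ pX x) (hpX1 : ∑ x, pX x = 1)
    (hpY0 : ∀ x y, 0 ≤ pY x y) (hpY1 : ∀ x, ∑ y, pY x y = 1)
    (hpZ0 : ∀ x z, 0 ≤ pZ x z) (hpZ1 : ∀ x, ∑ z, pZ x z = 1)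
    (hq0 : ∀ z y, 0 ≤ q z y) (hq1 : ∀ z, ∑ y, q z y = 1)
    (hqpos : ∀ z y, 0 < ∑ x, pX x * pY x y * pZ x z → 0 < q z y)
    (hr0 : ∀ z, 0 ≤ r z) (hr1 : ∑ z, r z = 1)
    (hrpos : ∀ z, 0 < ∑ x, pX x * pZ x z → 0 < r z) :
    MIjoint (fun zy : 𝒵 × 𝒴 => ∑ x, pX x * pY x zy.2 * pZ x zy.1)
        - β * MIjoint (fun zx : 𝒵 × 𝒳 => pX zx.2 * pZ zx.2 zx.1)
      ≥ (∑ x, ∑ y, pX x * pY x y * ∑ z, pZ x z * Real.log (q z y))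
        - β * ∑ x, pX x * KLdiv (fun z => pZ x z) r := by
  have hP0 : ∀ zy : 𝒵 × 𝒴, 0 ≤ ∑ x, pX x * pY x zy.2 * pZ x zy.1 :=
    fun zy => sum_nonneg fun x _ => mul_nonneg (mul_nonneg (hpX0 x) (hpY0 x _)) (hpZ0 x _)
  have hP1 : ∑ zy : 𝒵 × 𝒴, ∑ x, pX x * pY x zy.2 * pZ x zy.1 = 1 := by
    rw [Fintype.sum_prod_type, sum_comm_cycle]
    simp only [← sum_mul, ← mul_sum, hpY1, hpZ1, mul_one, hpX1]
  have hE : ∑ x, ∑ y, pX x * pY x y * ∑ z, pZ x z * log (q z y)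
      = ∑ z, ∑ y, (∑ x, pX x * pY x y * pZ x z) * log (q z y) := by
    simp only [mul_sum, sum_mul, mul_assoc]
    rw [sum_comm_cycle]
    exact sum_congr rfl fun z _ => sum_comm
  have hZY := sum_mul_log_le_MIjoint _ q hP0 hP1.le hq0 (fun z => (hq1 z).le) hqpos
  have hZX := MIjoint_le_sum_mul_KLdiv pX pZ r hpX0 hpX1 hpZ0 hpZ1 hr0 hr1.le hrpos
  rw [ge_iff_le, hE]
  linarith [mul_le_mul_of_nonneg_left hZX hβ]
end
end
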